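/- For fixed q, b, t there exists a (t,b)-burst-correcting code C ⊆ Σ_q^n with redundancy n − log_q|C| ≤ 2t·log_q n − log_q log n + O(1), i.e., |C| ≥ c · q^n · (log n) / n^{2t} for some constant c > 0 and all large n. -/

import Mathlib

open scoped BigOperators

/-- The cyclic interval of length `L` starting at position `i` in `ZMod n`. -/
def cycInt (n : ℕ) (i : ZMod n) (L : ℕ) : Set (ZMod n) :=
  {j | ∃ k : ℕ, k < L ∧ j = i + (k : ZMod n)}

/-- `e` is a burst supported in the cyclic interval starting at `i` of length `L ≤ b`. -/
def BurstAt {G : Type*} [AddCommGroup G] {n : ℕ} (b : ℕ) (e : ZMod n → G)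
    (i : ZMod n) (L : ℕ) : Prop :=
  L ≤ b ∧ ∀ j : ZMod n, e j ≠ 0 → j ∈ cycInt n i L

/-- `e` is a `b≤`-burst: its support lies in a cyclic interval of length at most `b`. -/
def IsBurst {G : Type*} [AddCommGroup G] {n : ℕ} (b : ℕ) (e : ZMod n → G) : Prop :=
  ∃ i L, BurstAt b e i L

/-- `w` is a sum of exactly `t` many `b≤`-bursts. -/
def SumOfBursts {G : Type*} [AddCommGroup G] {n : ℕ} (b t : ℕ) (w : ZMod n → G) : Prop :=
  ∃ l : List (ZMod n → G), l.length = t ∧ (∀ e ∈ l, IsBurst b e) ∧ l.sum = w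

/-- The cyclic burst distance: minimum number of `b≤`-bursts summing to `x - y`. -/
noncomputable def burstDist {G : Type*} [AddCommGroup G] {n : ℕ} (b : ℕ)
    (x y : ZMod n → G) : ℕ :=
  sInf {t | SumOfBursts b t (x - y)}

/-- `w` is a sum of exactly `t` pairwise disjoint `b≤`-bursts (disjoint covering intervals). -/
def SumOfDisjointBursts {G : Type*} [AddCommGroup G] {n : ℕ} (b t : ℕ)
    (w : ZMod n → G) : Prop :=
  ∃ (es : Fin t → ZMod n → G) (ps : Fin t → ZMod n) (Ls : Fin t → ℕ),
    (∀ m, BurstAt b (es m) (ps m) (Ls m)) ∧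
    (∀ m m' : Fin t, m ≠ m' → cycInt n (ps m) (Ls m) ∩ cycInt n (ps m') (Ls m') = ∅) ∧
    ∑ m, es m = w

/-- `B_{≤t,≤b}`: vectors expressible as a sum of at most `t` pairwise disjoint `b≤`-bursts. -/
def BSet (n b t : ℕ) (G : Type*) [AddCommGroup G] : Set (ZMod n → G) :=
  {w | ∃ i ≤ t, SumOfDisjointBursts b i w}

/-- The radius-`t` burst ball around `x`. -/
def burstBall {G : Type*} [AddCommGroup G] {n : ℕ} (b t : ℕ) (x : ZMod n → G) :
    Set (ZMod n → G) :=
  {y | burstDist b x y ≤ t}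

/-- A `(t,b)`-burst-correcting code: radius-`t` burst balls around distinct codewords
are disjoint. -/
def IsBurstCorrecting {G : Type*} [AddCommGroup G] {n : ℕ} (t b : ℕ)
    (C : Set (ZMod n → G)) : Prop :=
  ∀ u ∈ C, ∀ v ∈ C, u ≠ v → burstBall b t u ∩ burstBall b t v = ∅

/-!
Join two words of `Σ_q^n` when their difference is covered by `2t` cyclic intervals of length `b`;
an independent set of this graph is a `(t,b)`-burst-correcting code. A covered word is fixed by
the starting points of its intervals and the symbols inside them, so every degree is at most
`Δ = n^{2t} q^{2tb}`. If `u ~ v` and `p` lies in the support of `u - v`, then every common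
neighbour `x` has `u - x` or `v - x` nonzero at `p`, which pins one starting point to `b` values:
common neighbourhoods have size `d = O(n^{2t-1})`.

The bound `α ≥ N log (Δ/(d+1)) / (4eΔ)` comes from the hard-core model at fugacity
`λ = 1/(d+1)`. The expected size of the random independent set is `λ/(1+λ)` times the expected
number of uncovered vertices. Conditioning on the configuration outside `N[v]`, the vertex `v` is
uncovered with probability at least `(1+λ)^{-(1+X)}`, where `X` counts the neighbours of `v` that
are still free; Jensen's inequality turns this into `P(uncovered) ≥ (1+λ)^{-(1+E X)}`. A neighbour
`u` of `v` is free with probability at most `(1+λ)^{#(N(u) ∩ N[v])} ≤ (1+λ)^{d+1} ≤ e` times the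
probability that `u` is uncovered, so `E X ≤ e Δ · P(uncovered)`; together these force
`P(uncovered) ≳ log (λΔ) / (λΔ)`.
-/

open Finset Real

theorem Real.mul_exp_sum_div_le_sum_mul_exp {ι : Type*} (s : Finset ι) {w : ι → ℝ}
    (p : ι → ℝ) (hw : ∀ i ∈ s, 0 ≤ w i) (hW : 0 < ∑ i ∈ s, w i) :
    (∑ i ∈ s, w i) * exp ((∑ i ∈ s, w i * p i) / ∑ i ∈ s, w i) ≤
      ∑ i ∈ s, w i * exp (p i) := by
  set W := ∑ i ∈ s, w i
  have h := convexOn_exp.map_sum_le (t := s) (w := fun i => w i / W) (p := p)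
    (fun i hi => div_nonneg (hw i hi) hW.le) (by rw [← sum_div, div_self hW.ne']) (by simp)
  simp only [smul_eq_mul, div_mul_eq_mul_div, ← sum_div] at h
  rwa [le_div_iff₀' hW] at h

theorem Real.log_div_two_le_of_mul_exp_neg_le {M y : ℝ} (hM : 0 < M) (h : M * exp (-y) ≤ y) :
    log M / 2 ≤ y := by
  by_contra! hy
  have hsqrt : exp (log M / 2) ≤ M * exp (-y) := by
    calc exp (log M / 2) = M * exp (-(log M / 2)) := by
          rw [← exp_log hM, ← exp_add, log_exp]; ring_nf
      _ ≤ M * exp (-y) := by gcongr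
  linarith [add_one_le_exp (log M / 2)]

theorem Real.log_div_two_le_of_exp_neg_le {x D β : ℝ} (hx : x ≤ 1) (hD : 0 < D * x)
    (h : exp (-(x * (1 + exp 1 * D * β))) ≤ β) : log (D * x) / 2 ≤ exp 1 * (x * D * β) := by
  refine log_div_two_le_of_mul_exp_neg_le hD ?_
  have hβ : 0 ≤ β := (exp_pos _).le.trans h
  calc D * x * exp (-(exp 1 * (x * D * β)))
      = D * x * (exp x * exp (-(x * (1 + exp 1 * D * β)))) := by
        rw [← exp_add]; ring_nf
    _ ≤ D * x * (exp 1 * β) := by gcongr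
    _ = exp 1 * (x * D * β) := by ring

/-- The fibre of `I ↦ I \ S` over `J` embeds into the power set of `Q J` via `I ↦ I ∩ S`. -/
theorem Finset.sum_pow_card_mul_le_of_sdiff {α : Type*} [DecidableEq α] {x : ℝ} (hx : 0 ≤ x)
    {F F' : Finset (Finset α)} {S : Finset α} {Q : Finset α → Finset α} {g : Finset α → ℝ}
    (hg : ∀ J ∈ F', 0 ≤ g J) (hF : ∀ I ∈ F, I \ S ∈ F' ∧ I ∩ S ⊆ Q (I \ S)) :
    ∑ I ∈ F, x ^ #I * g (I \ S) ≤ ∑ J ∈ F', x ^ #J * g J * (1 + x) ^ #(Q J) := by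
  calc ∑ I ∈ F, x ^ #I * g (I \ S)
      = ∑ J ∈ F', ∑ I ∈ F with I \ S = J, x ^ #J * g J * x ^ #(I ∩ S) := by
        rw [← sum_fiberwise_of_maps_to (fun I hI => (hF I hI).1)]
        refine sum_congr rfl fun J _ => sum_congr rfl fun I hI => ?_
        obtain ⟨-, rfl⟩ := mem_filter.1 hI
        rw [← card_sdiff_add_card_inter I S, pow_add]
        ring
    _ ≤ ∑ J ∈ F', ∑ K ∈ (Q J).powerset, x ^ #J * g J * x ^ #K := by
        gcongr with J hJ
        have hinj : Set.InjOn (· ∩ S) (F.filter (· \ S = J) : Set (Finset α)) := by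
          intro I hI I' hI' h
          rw [coe_filter] at hI hI'
          rw [← sdiff_union_inter I S, ← sdiff_union_inter I' S, hI.2, hI'.2]
          exact congrArg _ h
        rw [← sum_image (f := fun K => x ^ #J * g J * x ^ #K) hinj]
        refine sum_le_sum_of_subset_of_nonneg ?_ fun _ _ _ => by have := hg J hJ; positivity
        intro K hK
        obtain ⟨I, hI, rfl⟩ := mem_image.1 hK
        obtain ⟨hIF, rfl⟩ := mem_filter.1 hI
        exact mem_powerset.2 (hF I hIF).2
    _ = ∑ J ∈ F', x ^ #J * g J * (1 + x) ^ #(Q J) := by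
        simp_rw [← mul_sum, add_comm (1 : ℝ), ← sum_pow_mul_eq_add_pow, one_pow, mul_one]

namespace SimpleGraph

variable {V : Type*} [Fintype V] {H : SimpleGraph V} [DecidableRel H.Adj]

theorem IsIndepSet.disjoint_neighborFinset {s : Finset V} (hs : H.IsIndepSet s) {v : V}
    (hv : v ∈ s) : Disjoint (H.neighborFinset v) s := by
  rw [Finset.disjoint_left]
  intro u hu hus
  rw [mem_neighborFinset] at hu
  exact hs hv hus (H.ne_of_adj hu) hu

theorem sum_sum_neighborFinset_le {f : V → ℝ} (hf : ∀ v, 0 ≤ f v) {Δ : ℕ}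
    (hΔ : ∀ v, H.degree v ≤ Δ) : ∑ v, ∑ u ∈ H.neighborFinset v, f u ≤ Δ * ∑ v, f v := by
  rw [sum_comm' (t' := univ) (s' := fun u => H.neighborFinset u) (by simp [adj_comm])]
  simp only [sum_const, card_neighborFinset_eq_degree, nsmul_eq_mul, mul_sum]
  exact sum_le_sum fun v _ => mul_le_mul_of_nonneg_right (by exact_mod_cast hΔ v) (hf v)

variable [DecidableEq V] (H)

def indepFinsets : Finset (Finset V) := {s | H.IsIndepSet s}

/-- The partition function of the hard-core model at fugacity `x` on `H` with `A` deleted. -/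
def hardcoreZ (x : ℝ) (A : Finset V) : ℝ := ∑ I ∈ H.indepFinsets with Disjoint A I, x ^ #I

/-- Once an independent set `I` is fixed outside `N[v]`, these are the neighbours of `v` that
could still be added to it. -/
def freeNeighborFinset (v : V) (I : Finset V) : Finset V :=
  {u ∈ H.neighborFinset v | Disjoint (H.neighborFinset u) (I \ insert v (H.neighborFinset v))}

/-- The probability that a uniformly random vertex has no neighbour in the random independent set
of the hard-core model at fugacity `x`. -/
noncomputable def uncoveredFraction (x : ℝ) : ℝ :=
  (∑ v, H.hardcoreZ x (H.neighborFinset v)) / (Fintype.card V * H.hardcoreZ x ∅)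

variable {H} {x : ℝ}

theorem mem_indepFinsets {s : Finset V} : s ∈ H.indepFinsets ↔ H.IsIndepSet s := by
  simp [indepFinsets]

theorem hardcoreZ_empty : H.hardcoreZ x ∅ = ∑ I ∈ H.indepFinsets, x ^ #I := by
  simp [hardcoreZ]

theorem hardcoreZ_anti (hx : 0 ≤ x) {A B : Finset V} (hAB : A ⊆ B) :
    H.hardcoreZ x B ≤ H.hardcoreZ x A :=
  sum_le_sum_of_subset_of_nonneg (monotone_filter_right _ fun _ _ h => h.mono_left hAB)
    fun _ _ _ => by positivity

theorem one_le_hardcoreZ (hx : 0 ≤ x) (A : Finset V) : 1 ≤ H.hardcoreZ x A := by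
  have hempty : ∅ ∈ {I ∈ H.indepFinsets | Disjoint A I} := by simp [mem_indepFinsets]
  rw [hardcoreZ]
  simpa using single_le_sum (f := fun I => x ^ #I) (fun _ _ => by positivity) hempty

theorem card_mul_hardcoreZ_empty_pos [Nonempty V] (hx : 0 ≤ x) :
    0 < Fintype.card V * H.hardcoreZ x ∅ :=
  mul_pos (by exact_mod_cast Fintype.card_pos) (one_pos.trans_le (one_le_hardcoreZ hx ∅))

theorem hardcoreZ_sdiff_le (hx : 0 ≤ x) (A S : Finset V) :
    H.hardcoreZ x (A \ S) ≤ (1 + x) ^ #S * H.hardcoreZ x A := by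
  have key := sum_pow_card_mul_le_of_sdiff hx (F := {I ∈ H.indepFinsets | Disjoint (A \ S) I})
    (F' := {I ∈ H.indepFinsets | Disjoint A I}) (Q := fun _ => S) (g := 1)
    (fun _ _ => zero_le_one) fun I hI => by
      simp only [mem_filter, mem_indepFinsets] at hI ⊢
      exact ⟨⟨hI.1.mono (by simp), disjoint_sdiff_comm.1 hI.2⟩, inter_subset_right⟩
  simpa [hardcoreZ, mul_sum, mul_comm] using key

theorem hardcoreZ_neighborFinset (v : V) :
    H.hardcoreZ x (H.neighborFinset v) =
      ∑ I ∈ H.indepFinsets with v ∈ I, x ^ #I +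
        H.hardcoreZ x (insert v (H.neighborFinset v)) := by
  rw [hardcoreZ, hardcoreZ, ← sum_filter_add_sum_filter_not _ (v ∈ ·), filter_filter,
    filter_filter]
  congr 2
  · refine filter_congr fun I hI => ?_
    exact and_iff_right_of_imp fun hv => (mem_indepFinsets.1 hI).disjoint_neighborFinset hv
  · exact filter_congr fun I _ => by rw [disjoint_insert_left, and_comm]

theorem mul_hardcoreZ_insert_le (hx : 0 ≤ x) (v : V) :
    x * H.hardcoreZ x (insert v (H.neighborFinset v)) ≤
      ∑ I ∈ H.indepFinsets with v ∈ I, x ^ #I := by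
  set F : Finset (Finset V) :=
    {J ∈ H.indepFinsets | Disjoint (insert v (H.neighborFinset v)) J}
  have hinj : Set.InjOn (insert v) (F : Set (Finset V)) := by
    intro J hJ J' hJ' h
    simp only [F, coe_filter, Set.mem_ofPred_eq, disjoint_insert_left] at hJ hJ'
    rw [← erase_insert hJ.2.1, h, erase_insert hJ'.2.1]
  calc x * H.hardcoreZ x (insert v (H.neighborFinset v))
      = ∑ J ∈ F, x ^ #(insert v J) := by
        rw [hardcoreZ, mul_sum]
        refine sum_congr rfl fun J hJ => ?_
        rw [mem_filter, disjoint_insert_left] at hJ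
        rw [card_insert_of_notMem hJ.2.1, pow_succ']
    _ ≤ ∑ I ∈ H.indepFinsets with v ∈ I, x ^ #I := by
        rw [← sum_image (f := fun I => x ^ #I) hinj]
        refine sum_le_sum_of_subset_of_nonneg ?_ fun _ _ _ => by positivity
        intro I hI
        obtain ⟨J, hJ, rfl⟩ := mem_image.1 hI
        rw [mem_filter, disjoint_insert_left, mem_indepFinsets] at hJ
        refine mem_filter.2 ⟨mem_indepFinsets.2 ?_, mem_insert_self v J⟩
        rw [coe_insert]
        refine hJ.1.insert fun u hu _ => ?_
        have hvu : ¬ H.Adj v u := fun h =>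
          Finset.disjoint_left.1 hJ.2.2 ((H.mem_neighborFinset v u).2 h) hu
        exact ⟨hvu, fun h => hvu h.symm⟩

theorem mul_sum_hardcoreZ_neighborFinset_le (hx : 0 ≤ x) :
    x * ∑ v, H.hardcoreZ x (H.neighborFinset v) ≤ (1 + x) * H.indepNum * H.hardcoreZ x ∅ := by
  have hocc : ∑ v, ∑ I ∈ H.indepFinsets with v ∈ I, x ^ #I ≤ H.indepNum * H.hardcoreZ x ∅ := by
    rw [sum_comm' (t' := H.indepFinsets) (s' := id) (by simp [and_comm]), hardcoreZ_empty,
      mul_sum]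
    refine sum_le_sum fun I hI => ?_
    rw [id, sum_const, nsmul_eq_mul]
    gcongr
    exact_mod_cast (mem_indepFinsets.1 hI).card_le_indepNum
  calc x * ∑ v, H.hardcoreZ x (H.neighborFinset v)
      ≤ (1 + x) * ∑ v, ∑ I ∈ H.indepFinsets with v ∈ I, x ^ #I := by
        rw [mul_sum, mul_sum]
        refine sum_le_sum fun v _ => ?_
        rw [hardcoreZ_neighborFinset]
        linarith [mul_hardcoreZ_insert_le (H := H) hx v]
    _ ≤ (1 + x) * H.indepNum * H.hardcoreZ x ∅ := by
        rw [mul_assoc]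
        gcongr

theorem sum_div_pow_card_freeNeighborFinset_le (hx : 0 ≤ x) (v : V) :
    ∑ I ∈ H.indepFinsets, x ^ #I / (1 + x) ^ (1 + #(H.freeNeighborFinset v I)) ≤
      H.hardcoreZ x (H.neighborFinset v) := by
  set S := insert v (H.neighborFinset v)
  set g : Finset V → ℝ := fun J => ((1 + x) ^ (1 + #(H.freeNeighborFinset v J)))⁻¹
  have hsplit := sum_pow_card_mul_le_of_sdiff hx (F := H.indepFinsets)
    (F' := {J ∈ H.indepFinsets | Disjoint S J}) (S := S)
    (Q := fun J => insert v (H.freeNeighborFinset v J)) (g := g) (fun _ _ => by positivity)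
    fun I hI => by
      have hI := mem_indepFinsets.1 hI
      refine ⟨mem_filter.2 ⟨mem_indepFinsets.2 (hI.mono (by simp)), disjoint_sdiff⟩, ?_⟩
      intro u hu
      obtain ⟨huI, huS⟩ := mem_inter.1 hu
      rcases mem_insert.1 huS with rfl | huv
      · exact mem_insert_self _ _
      refine mem_insert_of_mem (mem_filter.2 ⟨huv, ?_⟩)
      rw [Finset.sdiff_idem]
      exact (hI.disjoint_neighborFinset huI).mono_right sdiff_subset
  calc ∑ I ∈ H.indepFinsets, x ^ #I / (1 + x) ^ (1 + #(H.freeNeighborFinset v I))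
      = ∑ I ∈ H.indepFinsets, x ^ #I * g (I \ S) := by
        simp only [g, freeNeighborFinset, Finset.sdiff_idem, div_eq_mul_inv, S]
    _ ≤ ∑ J ∈ H.indepFinsets with Disjoint S J,
          x ^ #J * g J * (1 + x) ^ #(insert v (H.freeNeighborFinset v J)) := hsplit
    _ ≤ H.hardcoreZ x S := by
        refine sum_le_sum fun J _ => ?_
        rw [mul_assoc]
        refine mul_le_of_le_one_right (by positivity) ?_
        rw [inv_mul_le_one₀ (by positivity), add_comm 1]
        exact pow_le_pow_right₀ (by linarith) ((card_insert_le _ _).trans_eq (add_comm _ _))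
    _ ≤ H.hardcoreZ x (H.neighborFinset v) := hardcoreZ_anti hx (subset_insert _ _)

theorem sum_pow_mul_card_freeNeighborFinset (v : V) :
    ∑ I ∈ H.indepFinsets, x ^ #I * #(H.freeNeighborFinset v I) =
      ∑ u ∈ H.neighborFinset v,
        H.hardcoreZ x (H.neighborFinset u \ insert v (H.neighborFinset v)) := by
  simp only [freeNeighborFinset, card_filter, Nat.cast_sum, mul_sum, hardcoreZ, sum_filter]
  rw [sum_comm]
  refine sum_congr rfl fun u _ => sum_congr rfl fun I _ => ?_
  simp [disjoint_sdiff_comm]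

theorem hardcoreZ_sdiff_insert_le (hx : 0 ≤ x) {d : ℕ}
    (hd : ∀ u v, H.Adj u v → #(H.neighborFinset u ∩ H.neighborFinset v) ≤ d) {u v : V}
    (huv : H.Adj v u) :
    H.hardcoreZ x (H.neighborFinset u \ insert v (H.neighborFinset v)) ≤
      (1 + x) ^ (d + 1) * H.hardcoreZ x (H.neighborFinset u) := by
  set S := H.neighborFinset u ∩ insert v (H.neighborFinset v)
  have hS : #S ≤ d + 1 := by
    change #(H.neighborFinset u ∩ insert v (H.neighborFinset v)) ≤ d + 1
    rw [inter_insert_of_mem ((H.mem_neighborFinset u v).2 huv.symm)]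
    exact (card_insert_le _ _).trans (by linarith [hd u v huv.symm])
  calc H.hardcoreZ x (H.neighborFinset u \ insert v (H.neighborFinset v))
      = H.hardcoreZ x (H.neighborFinset u \ S) := by rw [sdiff_inter_self_left]
    _ ≤ (1 + x) ^ #S * H.hardcoreZ x (H.neighborFinset u) := hardcoreZ_sdiff_le hx _ _
    _ ≤ (1 + x) ^ (d + 1) * H.hardcoreZ x (H.neighborFinset u) := by
        have := one_le_hardcoreZ (H := H) hx (H.neighborFinset u)
        gcongr
        linarith

theorem sum_sum_pow_mul_card_freeNeighborFinset_le (hx : 0 ≤ x) {Δ d : ℕ}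
    (hΔ : ∀ v, H.degree v ≤ Δ)
    (hd : ∀ u v, H.Adj u v → #(H.neighborFinset u ∩ H.neighborFinset v) ≤ d) :
    ∑ v, ∑ I ∈ H.indepFinsets, x ^ #I * #(H.freeNeighborFinset v I) ≤
      (1 + x) ^ (d + 1) * Δ * ∑ v, H.hardcoreZ x (H.neighborFinset v) := by
  simp_rw [sum_pow_mul_card_freeNeighborFinset]
  calc ∑ v, ∑ u ∈ H.neighborFinset v,
        H.hardcoreZ x (H.neighborFinset u \ insert v (H.neighborFinset v))
      ≤ ∑ v, ∑ u ∈ H.neighborFinset v,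
          (1 + x) ^ (d + 1) * H.hardcoreZ x (H.neighborFinset u) :=
        sum_le_sum fun v _ => sum_le_sum fun u hu =>
          hardcoreZ_sdiff_insert_le hx hd ((H.mem_neighborFinset v u).1 hu)
    _ ≤ Δ * ∑ u, (1 + x) ^ (d + 1) * H.hardcoreZ x (H.neighborFinset u) :=
        sum_sum_neighborFinset_le (fun u => by
          have := one_le_hardcoreZ (H := H) hx (H.neighborFinset u); positivity) hΔ
    _ = (1 + x) ^ (d + 1) * Δ * ∑ v, H.hardcoreZ x (H.neighborFinset v) := by
        rw [← mul_sum]; ring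

theorem exp_neg_le_uncoveredFraction_of_freeNeighborFinset (hx : 0 ≤ x) [Nonempty V] :
    exp (-(x * (1 + (∑ v, ∑ I ∈ H.indepFinsets, x ^ #I * #(H.freeNeighborFinset v I)) /
      (Fintype.card V * H.hardcoreZ x ∅)))) ≤ H.uncoveredFraction x := by
  set P := (univ : Finset V) ×ˢ H.indepFinsets
  set W := Fintype.card V * H.hardcoreZ x ∅
  set A := ∑ v, ∑ I ∈ H.indepFinsets, x ^ #I * (#(H.freeNeighborFinset v I) : ℝ)
  set L := log (1 + x)
  have hW : ∑ p ∈ P, x ^ #p.2 = W := by simp [P, W, sum_product, hardcoreZ_empty]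
  have hWpos : 0 < W := card_mul_hardcoreZ_empty_pos hx
  have hmean : (∑ p ∈ P, x ^ #p.2 * -(L * (1 + #(H.freeNeighborFinset p.1 p.2)))) / W =
      -(L * (1 + A / W)) := by
    have hA : A = ∑ p ∈ P, x ^ #p.2 * (#(H.freeNeighborFinset p.1 p.2) : ℝ) := by
      rw [sum_product]
    have hsum : ∑ p ∈ P, x ^ #p.2 * -(L * (1 + #(H.freeNeighborFinset p.1 p.2))) =
        -L * (W + A) := by
      rw [← hW, hA, ← sum_add_distrib, mul_sum]
      exact sum_congr rfl fun _ _ => by ring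
    rw [hsum]
    field_simp
  have hexp (k : ℕ) : exp (-(L * (1 + k))) = ((1 + x) ^ (1 + k))⁻¹ := by
    have hk : L * (1 + k) = ((1 + k : ℕ) : ℝ) * L := by push_cast; ring
    rw [exp_neg, hk, exp_nat_mul, exp_log (by linarith)]
  have hL : L ≤ x := by linarith [log_le_sub_one_of_pos (show 0 < 1 + x by linarith)]
  rw [uncoveredFraction, le_div_iff₀' hWpos]
  calc W * exp (-(x * (1 + A / W)))
      ≤ W * exp (-(L * (1 + A / W))) := by
        have hA : 0 ≤ A / W :=
          div_nonneg (sum_nonneg fun _ _ => sum_nonneg fun _ _ => by positivity) hWpos.le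
        exact mul_le_mul_of_nonneg_left
          (exp_le_exp.2 (neg_le_neg (mul_le_mul_of_nonneg_right hL (by linarith)))) hWpos.le
    _ ≤ ∑ p ∈ P, x ^ #p.2 * exp (-(L * (1 + #(H.freeNeighborFinset p.1 p.2)))) := by
        rw [← hmean, ← hW]
        exact mul_exp_sum_div_le_sum_mul_exp P _ (fun _ _ => by positivity) (hW ▸ hWpos)
    _ = ∑ v, ∑ I ∈ H.indepFinsets, x ^ #I / (1 + x) ^ (1 + #(H.freeNeighborFinset v I)) := by
        simp only [P, sum_product, hexp, div_eq_mul_inv]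
    _ ≤ ∑ v, H.hardcoreZ x (H.neighborFinset v) :=
        sum_le_sum fun v _ => sum_div_pow_card_freeNeighborFinset_le hx v

theorem exp_neg_le_uncoveredFraction (hx : 0 ≤ x) [Nonempty V] {Δ d : ℕ}
    (hΔ : ∀ v, H.degree v ≤ Δ)
    (hd : ∀ u v, H.Adj u v → #(H.neighborFinset u ∩ H.neighborFinset v) ≤ d) :
    exp (-(x * (1 + (1 + x) ^ (d + 1) * Δ * H.uncoveredFraction x))) ≤
      H.uncoveredFraction x := by
  refine (exp_le_exp.2 (neg_le_neg (mul_le_mul_of_nonneg_left (add_le_add le_rfl ?_) hx))).trans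
    (exp_neg_le_uncoveredFraction_of_freeNeighborFinset hx)
  rw [uncoveredFraction, ← mul_div_assoc]
  exact div_le_div_of_nonneg_right (sum_sum_pow_mul_card_freeNeighborFinset_le hx hΔ hd)
    (card_mul_hardcoreZ_empty_pos hx).le

theorem le_indepNum_of_codegree_le {Δ d : ℕ} (hΔ : ∀ v, H.degree v ≤ Δ)
    (hd : ∀ u v, H.Adj u v → #(H.neighborFinset u ∩ H.neighborFinset v) ≤ d) :
    Fintype.card V * log (Δ / (d + 1)) / (4 * exp 1 * Δ) ≤ H.indepNum := by
  rcases isEmpty_or_nonempty V with hV | hV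
  · simp
  rcases le_or_gt ((Δ : ℝ) / (d + 1)) 1 with hM | hM
  · have hlog : log (Δ / (d + 1)) ≤ 0 := log_nonpos (by positivity) hM
    exact (div_nonpos_of_nonpos_of_nonneg (mul_nonpos_of_nonneg_of_nonpos (by positivity) hlog)
      (by positivity)).trans (by positivity)
  set x : ℝ := ((d + 1 : ℕ) : ℝ)⁻¹ with hx
  have hx0 : 0 < x := by positivity
  have hx1 : x ≤ 1 := inv_le_one_of_one_le₀ (by norm_cast; omega)
  have hMx : (Δ : ℝ) / (d + 1) = Δ * x := by simp [hx, div_eq_mul_inv]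
  have hΔx : 0 < (Δ : ℝ) * x := hMx ▸ one_pos.trans hM
  set β := H.uncoveredFraction x with hβdef
  -- the fugacity `1 / (d + 1)` keeps the codegree loss `(1 + x) ^ (d + 1)` below `e`
  have hβ : exp (-(x * (1 + exp 1 * Δ * β))) ≤ β := by
    refine le_trans ?_ (exp_neg_le_uncoveredFraction hx0.le hΔ hd)
    have hβ0 : 0 ≤ β := (exp_pos _).le.trans (exp_neg_le_uncoveredFraction hx0.le hΔ hd)
    gcongr
    exact one_add_inv_pow_le_exp
  have hlog := log_div_two_le_of_exp_neg_le hx1 hΔx hβ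
  have hZ := one_le_hardcoreZ (H := H) hx0.le ∅
  have hxβ : x * β * Fintype.card V ≤ 2 * H.indepNum := by
    calc x * β * Fintype.card V
        = x * (∑ v, H.hardcoreZ x (H.neighborFinset v)) / H.hardcoreZ x ∅ := by
          have : (0 : ℝ) < Fintype.card V := by exact_mod_cast Fintype.card_pos
          rw [hβdef, uncoveredFraction]; field_simp
      _ ≤ (1 + x) * H.indepNum := by
          rw [div_le_iff₀ (by linarith)]; exact mul_sum_hardcoreZ_neighborFinset_le hx0.le
      _ ≤ 2 * H.indepNum := by gcongr; linarith
  rw [hMx, div_le_iff₀ (by have := pos_of_mul_pos_left hΔx hx0.le; positivity)]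
  calc Fintype.card V * log (Δ * x) ≤ Fintype.card V * (2 * (exp 1 * (x * Δ * β))) := by
        gcongr; linarith
    _ = 2 * exp 1 * Δ * (x * β * Fintype.card V) := by ring
    _ ≤ 2 * exp 1 * Δ * (2 * H.indepNum) := by gcongr
    _ = H.indepNum * (4 * exp 1 * Δ) := by ring

end SimpleGraph

section Bursts

variable {G : Type*} [AddCommGroup G] {n b : ℕ}

def cycCover (b : ℕ) {ι : Type*} [Fintype ι] (st : ι → ZMod n) : Finset (ZMod n) :=
  univ.biUnion fun i => (range b).image fun k : ℕ => st i + k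

theorem mem_cycCover {ι : Type*} [Fintype ι] {st : ι → ZMod n} {j : ZMod n} :
    j ∈ cycCover b st ↔ ∃ i, j ∈ cycInt n (st i) b := by
  simp [cycCover, cycInt, eq_comm]

theorem card_cycCover_le {ι : Type*} [Fintype ι] (st : ι → ZMod n) :
    #(cycCover b st) ≤ Fintype.card ι * b := by
  refine card_biUnion_le.trans ((sum_le_sum fun _ _ => card_image_le).trans ?_)
  simp

def CoveredByIntervals (b s : ℕ) (w : ZMod n → G) : Prop :=
  ∃ st : Fin s → ZMod n, ∀ j, w j ≠ 0 → j ∈ cycCover b st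

theorem CoveredByIntervals.neg {s : ℕ} {w : ZMod n → G} (h : CoveredByIntervals b s w) :
    CoveredByIntervals b s (-w) := by
  simpa [CoveredByIntervals] using h

theorem CoveredByIntervals.add {s s' : ℕ} {w w' : ZMod n → G} (h : CoveredByIntervals b s w)
    (h' : CoveredByIntervals b s' w') : CoveredByIntervals b (s + s') (w + w') := by
  obtain ⟨st, hst⟩ := h
  obtain ⟨st', hst'⟩ := h'
  refine ⟨Fin.append st st', fun j hj => ?_⟩
  rw [mem_cycCover]
  by_cases hwj : w j = 0
  · obtain ⟨i, hi⟩ := mem_cycCover.1 (hst' j (by simpa [hwj] using hj))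
    exact ⟨Fin.natAdd s i, by rwa [Fin.append_right]⟩
  · obtain ⟨i, hi⟩ := mem_cycCover.1 (hst j hwj)
    exact ⟨Fin.castAdd s' i, by rwa [Fin.append_left]⟩

theorem IsBurst.coveredByIntervals {e : ZMod n → G} (h : IsBurst b e) :
    CoveredByIntervals b 1 e := by
  obtain ⟨i, L, hLb, hsupp⟩ := h
  refine ⟨fun _ => i, fun j hj => mem_cycCover.2 ⟨0, ?_⟩⟩
  obtain ⟨k, hk, rfl⟩ := hsupp j hj
  exact ⟨k, hk.trans_le hLb, rfl⟩

theorem coveredByIntervals_sum {l : List (ZMod n → G)} (hl : ∀ e ∈ l, IsBurst b e) :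
    CoveredByIntervals b l.length l.sum := by
  induction l with
  | nil => exact ⟨Fin.elim0, by simp⟩
  | cons e l ih =>
    rw [List.sum_cons, List.length_cons, add_comm l.length]
    exact (hl e (by simp)).coveredByIntervals.add (ih fun e he => hl e (by simp [he]))

theorem SumOfBursts.coveredByIntervals {s : ℕ} {w : ZMod n → G} (h : SumOfBursts b s w) :
    CoveredByIntervals b s w := by
  obtain ⟨l, rfl, hl, rfl⟩ := h
  exact coveredByIntervals_sum hl

theorem SumOfBursts.mono {s s' : ℕ} {w : ZMod n → G} (h : SumOfBursts b s w) (hs : s ≤ s') :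
    SumOfBursts b s' w := by
  obtain ⟨l, rfl, hl, rfl⟩ := h
  refine ⟨l ++ List.replicate (s' - l.length) 0, by simp [hs], fun e he => ?_, by simp⟩
  rcases List.mem_append.1 he with he | he
  · exact hl e he
  · rw [List.eq_of_mem_replicate he]
    exact ⟨0, 0, Nat.zero_le b, fun j hj => absurd rfl hj⟩

theorem sumOfBursts_card [NeZero n] (hb : 1 ≤ b) (w : ZMod n → G) : SumOfBursts b n w := by
  refine ⟨univ.toList.map fun j => Pi.single j (w j), by simp, fun e he => ?_, by
    rw [sum_map_toList, univ_sum_single]⟩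
  obtain ⟨j, -, rfl⟩ := List.mem_map.1 he
  refine ⟨j, 1, hb, fun i hi => ⟨0, one_pos, ?_⟩⟩
  by_contra hij
  simp_all [Pi.single_apply]

theorem sumOfBursts_burstDist [NeZero n] (hb : 1 ≤ b) (x y : ZMod n → G) :
    SumOfBursts b (burstDist b x y) (x - y) :=
  Nat.sInf_mem (s := {t | SumOfBursts b t (x - y)}) ⟨n, sumOfBursts_card hb (x - y)⟩

theorem coveredByIntervals_sub_of_mem_burstBall [NeZero n] (hb : 1 ≤ b) {t : ℕ}
    {u v y : ZMod n → G} (hu : y ∈ burstBall b t u) (hv : y ∈ burstBall b t v) :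
    CoveredByIntervals b (2 * t) (u - v) := by
  have hu' := ((sumOfBursts_burstDist hb u y).mono hu).coveredByIntervals
  have hv' := ((sumOfBursts_burstDist hb v y).mono hv).coveredByIntervals.neg
  rw [two_mul, ← sub_add_sub_cancel u y v, ← neg_sub v y]
  exact hu'.add hv'

theorem card_filter_support_subset_le {α M : Type*} [Fintype α] [DecidableEq α] [Zero M]
    [Fintype M] [DecidableEq M] (S : Finset α) :
    #{f : α → M | ∀ a, f a ≠ 0 → a ∈ S} ≤ Fintype.card M ^ #S := by
  calc #{f : α → M | ∀ a, f a ≠ 0 → a ∈ S}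
      ≤ #(univ : Finset (S → M)) := by
        refine card_le_card_of_injOn (fun f a => f a) (fun _ _ => mem_coe.2 (mem_univ _)) ?_
        intro f hf f' hf' h
        simp only [mem_coe, mem_filter, mem_univ, true_and] at hf hf'
        funext a
        by_cases ha : a ∈ S
        · exact congrFun h ⟨a, ha⟩
        · rw [not_imp_comm.1 (hf a) ha, not_imp_comm.1 (hf' a) ha]
    _ = Fintype.card M ^ #S := by simp

variable [Fintype G] [DecidableEq G] [NeZero n]

instance {s : ℕ} : DecidablePred (CoveredByIntervals (G := G) (n := n) b s) :=
  fun _ => by unfold CoveredByIntervals; infer_instance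

theorem card_filter_coveredByIntervals_le {s : ℕ} (P : (Fin s → ZMod n) → Prop)
    [DecidablePred P] :
    #{w : ZMod n → G | ∃ st, P st ∧ ∀ j, w j ≠ 0 → j ∈ cycCover b st} ≤
      #{st | P st} * Fintype.card G ^ (s * b) := by
  set T : Finset (Fin s → ZMod n) := {st | P st}
  calc #{w : ZMod n → G | ∃ st, P st ∧ ∀ j, w j ≠ 0 → j ∈ cycCover b st}
      ≤ #(T.biUnion fun st => {w : ZMod n → G | ∀ j, w j ≠ 0 → j ∈ cycCover b st}) := by
        refine card_le_card fun w hw => ?_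
        obtain ⟨st, hP, hst⟩ := (mem_filter.1 hw).2
        exact mem_biUnion.2 ⟨st, mem_filter.2 ⟨mem_univ _, hP⟩, mem_filter.2 ⟨mem_univ _, hst⟩⟩
    _ ≤ ∑ st ∈ T, Fintype.card G ^ (s * b) := by
        refine card_biUnion_le.trans (sum_le_sum fun st _ => ?_)
        refine (card_filter_support_subset_le _).trans (pow_le_pow_right₀ Fintype.card_pos ?_)
        simpa using card_cycCover_le (b := b) st
    _ = #T * Fintype.card G ^ (s * b) := by rw [sum_const, smul_eq_mul]

theorem card_filter_mem_cycCover_le {s : ℕ} (p : ZMod n) :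
    #{st : Fin s → ZMod n | p ∈ cycCover b st} ≤ s * b * n ^ (s - 1) := by
  calc #{st : Fin s → ZMod n | p ∈ cycCover b st}
      ≤ #(univ.biUnion fun i : Fin s => (range b).biUnion fun k =>
          {st : Fin s → ZMod n | st i = p - k}) := by
        refine card_le_card fun st hst => ?_
        obtain ⟨i, k, hk, hp⟩ := mem_cycCover.1 (mem_filter.1 hst).2
        simp only [mem_biUnion, mem_filter, mem_univ, true_and, mem_range]
        exact ⟨i, k, hk, by rw [hp]; ring⟩
    _ ≤ ∑ i : Fin s, ∑ k ∈ range b, n ^ (s - 1) := by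
        refine card_biUnion_le.trans (sum_le_sum fun i _ => card_biUnion_le.trans
          (sum_le_sum fun k _ => ?_))
        have := Fintype.card_filter_piFinset_const_eq_of_mem (univ : Finset (ZMod n)) i
          (mem_univ (p - k))
        simp_all
    _ = s * b * n ^ (s - 1) := by simp [mul_assoc]

theorem card_filter_coveredByIntervals_apply_ne_zero_le (s : ℕ) (p : ZMod n) :
    #{z : ZMod n → G | CoveredByIntervals b s z ∧ z p ≠ 0} ≤
      s * b * n ^ (s - 1) * Fintype.card G ^ (s * b) := by
  refine le_trans (card_le_card fun z hz => ?_)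
    ((card_filter_coveredByIntervals_le (fun st => p ∈ cycCover b st)).trans
      (Nat.mul_le_mul_right _ (card_filter_mem_cycCover_le p)))
  obtain ⟨⟨st, hst⟩, hp⟩ := (mem_filter.1 hz).2
  exact mem_filter.2 ⟨mem_univ _, st, hst p hp, hst⟩

/-- Since `w p ≠ 0`, one of `z` and `z - w` is nonzero at `p`. -/
theorem card_filter_coveredByIntervals_and_sub_le (s : ℕ) {w : ZMod n → G} {p : ZMod n}
    (hp : w p ≠ 0) :
    #{z : ZMod n → G | CoveredByIntervals b s z ∧ CoveredByIntervals b s (z - w)} ≤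
      2 * #{z : ZMod n → G | CoveredByIntervals b s z ∧ z p ≠ 0} := by
  set Z : Finset (ZMod n → G) := {z | CoveredByIntervals b s z ∧ z p ≠ 0}
  calc #{z : ZMod n → G | CoveredByIntervals b s z ∧ CoveredByIntervals b s (z - w)}
      ≤ #(Z ∪ Z.image (· + w)) := by
        refine card_le_card fun z hz => ?_
        obtain ⟨hz, hzw⟩ := (mem_filter.1 hz).2
        by_cases hzp : z p = 0
        · refine mem_union_right _
            (mem_image.2 ⟨z - w, mem_filter.2 ⟨mem_univ _, hzw, ?_⟩, by simp⟩)
          simpa [hzp] using hp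
        · exact mem_union_left _ (mem_filter.2 ⟨mem_univ _, hz, hzp⟩)
    _ ≤ 2 * #Z :=
        (card_union_le _ _).trans (by rw [two_mul]; exact Nat.add_le_add_left card_image_le _)

end Bursts

def burstGraph (G : Type*) [AddCommGroup G] (n b T : ℕ) : SimpleGraph (ZMod n → G) where
  Adj u v := u ≠ v ∧ CoveredByIntervals b T (u - v)
  symm := ⟨fun u v h => ⟨h.1.symm, by simpa using h.2.neg⟩⟩
  loopless := ⟨fun u h => h.1 rfl⟩

@[simp]
theorem burstGraph_adj {G : Type*} [AddCommGroup G] {n b T : ℕ} {u v : ZMod n → G} :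
    (burstGraph G n b T).Adj u v ↔ u ≠ v ∧ CoveredByIntervals b T (u - v) :=
  Iff.rfl

section BurstGraph

variable {G : Type*} [AddCommGroup G] [Fintype G] [DecidableEq G] {n b T : ℕ} [NeZero n]
  [DecidableRel (burstGraph G n b T).Adj]

theorem burstGraph_degree_le (u : ZMod n → G) :
    (burstGraph G n b T).degree u ≤ n ^ T * Fintype.card G ^ (T * b) := by
  calc (burstGraph G n b T).degree u
      ≤ #{w : ZMod n → G | CoveredByIntervals b T w} := by
        rw [← SimpleGraph.card_neighborFinset_eq_degree]
        refine card_le_card_of_injOn (u - ·) (fun v hv => ?_) sub_right_injective.injOn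
        simpa using ((burstGraph G n b T).mem_neighborFinset u v).1 hv |>.2
    _ ≤ n ^ T * Fintype.card G ^ (T * b) := by
        simpa [CoveredByIntervals] using
          card_filter_coveredByIntervals_le (G := G) (b := b) fun _ : Fin T → ZMod n => True

theorem burstGraph_codegree_le {u v : ZMod n → G} (huv : (burstGraph G n b T).Adj u v) :
    #((burstGraph G n b T).neighborFinset u ∩ (burstGraph G n b T).neighborFinset v) ≤
      2 * (T * b * n ^ (T - 1) * Fintype.card G ^ (T * b)) := by
  obtain ⟨p, hp⟩ := Function.ne_iff.1 (sub_ne_zero.2 (burstGraph_adj.1 huv).1)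
  refine le_trans ?_ ((card_filter_coveredByIntervals_and_sub_le T hp).trans
    (Nat.mul_le_mul_left 2 (card_filter_coveredByIntervals_apply_ne_zero_le T p)))
  refine card_le_card_of_injOn (u - ·) (fun x hx => ?_) sub_right_injective.injOn
  simp only [coe_inter, Set.mem_inter_iff, mem_coe, SimpleGraph.mem_neighborFinset,
    burstGraph_adj] at hx
  simpa [sub_sub_sub_cancel_left] using And.intro hx.1.2 hx.2.2

end BurstGraph

theorem isBurstCorrecting_of_isIndepSet {G : Type*} [AddCommGroup G] {n b t : ℕ} [NeZero n]
    (hb : 1 ≤ b) {C : Set (ZMod n → G)} (hC : (burstGraph G n b (2 * t)).IsIndepSet C) :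
    IsBurstCorrecting t b C := by
  refine fun u hu v hv huv => Set.eq_empty_of_forall_notMem fun y hy => ?_
  exact hC hu hv huv (burstGraph_adj.2 ⟨huv, coveredByIntervals_sub_of_mem_burstBall hb hy.1 hy.2⟩)

theorem log_div_two_le_log_pow_mul_div {n T K Q : ℕ} (hT : 1 ≤ T) (hK : 1 ≤ K) (hQ : 1 ≤ Q)
    (hn : (4 * K) ^ 2 ≤ n) :
    log n / 2 ≤ log ((n ^ T * Q : ℕ) / ((2 * (K * n ^ (T - 1) * Q) : ℕ) + 1 : ℝ)) := by
  have hn0 : 0 < n := lt_of_lt_of_le (by positivity) hn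
  have hd : (1 : ℝ) ≤ K * n ^ (T - 1) * Q := by
    exact_mod_cast Nat.one_le_iff_ne_zero.2 (by positivity)
  have hsqrt : 4 * K ≤ √n := Real.le_sqrt_of_sq_le (by exact_mod_cast hn)
  have hpow : (n : ℝ) ^ T = n * n ^ (T - 1) := by rw [← pow_succ']; congr 1; omega
  rw [← log_sqrt (Nat.cast_nonneg n)]
  refine log_le_log (by positivity) ((le_div_iff₀ (by positivity)).2 ?_)
  push_cast
  calc √n * (2 * (K * n ^ (T - 1) * Q) + 1) ≤ √n * (4 * K * n ^ (T - 1) * Q) := by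
        gcongr; linarith
    _ = 4 * K * √n * (n ^ (T - 1) * Q) := by ring
    _ ≤ √n * √n * (n ^ (T - 1) * Q) := by gcongr
    _ = n ^ T * Q := by rw [Real.mul_self_sqrt (Nat.cast_nonneg _), hpow]; ring

theorem improved_gv_bursts_general {G : Type*} [AddCommGroup G] [Fintype G] (q t b : ℕ)
    (hq : Fintype.card G = q) (hb : 1 ≤ b) (ht : 1 ≤ t) :
    ∃ c : ℝ, 0 < c ∧ ∃ n₀ : ℕ, ∀ n ≥ n₀, ∃ C : Set (ZMod n → G),
      IsBurstCorrecting t b C ∧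
      c * (q : ℝ) ^ n * Real.log n / (n : ℝ) ^ (2 * t) ≤ (C.ncard : ℝ) := by
  classical
  subst hq
  set T := 2 * t
  set Q := Fintype.card G ^ (T * b)
  refine ⟨(8 * exp 1 * Q)⁻¹, by positivity, (4 * (T * b)) ^ 2, fun n hn => ?_⟩
  have : NeZero n := ⟨by have : 0 < (4 * (T * b)) ^ 2 := (by positivity); omega⟩
  obtain ⟨C, hC⟩ := (burstGraph G n b T).exists_isNIndepSet_indepNum
  refine ⟨C, isBurstCorrecting_of_isIndepSet hb hC.isIndepSet, ?_⟩
  have hα := (burstGraph G n b T).le_indepNum_of_codegree_le burstGraph_degree_le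
    fun _ _ => burstGraph_codegree_le
  rw [Set.ncard_coe_finset, hC.card_eq]
  refine le_trans ?_ hα
  rw [Fintype.card_fun, ZMod.card]
  have hQ : 1 ≤ Q := Nat.one_le_pow _ _ Fintype.card_pos
  calc (8 * exp 1 * Q)⁻¹ * (Fintype.card G : ℝ) ^ n * log n / (n : ℝ) ^ T
      = (Fintype.card G ^ n : ℕ) * (log n / 2) / (4 * exp 1 * (n ^ T * Q : ℕ)) := by
        push_cast; field_simp; ring
    _ ≤ _ := by
        gcongr
        exact log_div_two_le_log_pow_mul_div (by omega) (Nat.one_le_iff_ne_zero.2 (by positivity))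
          hQ hn

/-- improved GV bound: there exists a (t,b)-burst-correcting code with
|C| ≥ c·q^n·(log n)/n^{2t} for some constant c > 0 and all large n, i.e. redundancy
at most 2t·log_q n − log_q log n + O(1). -/
theorem improved_gv_bursts {G : Type*} [AddCommGroup G] [Fintype G] (q t b : ℕ)
    (hq : Fintype.card G = q) (hq2 : 2 ≤ q) (hb : 1 ≤ b) (ht : 1 ≤ t) :
    ∃ c : ℝ, 0 < c ∧ ∃ n₀ : ℕ, ∀ n ≥ n₀, ∃ C : Set (ZMod n → G),
      IsBurstCorrecting t b C ∧
      c * (q : ℝ) ^ n * Real.log n / (n : ℝ) ^ (2 * t) ≤ (C.ncard : ℝ) :=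
  improved_gv_bursts_general q t b hq hb ht
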